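/- Let T be a polynomial of degree n ≥ 1 with complex coefficients, and let 2ν be the number of roots of T² − 1 of odd multiplicity, counted with multiplicity (i.e., 2ν = Σⱼ (2βⱼ − 1) over the distinct odd-multiplicity roots aⱼ with multiplicities 2βⱼ − 1). Then 2ν is indeed even and 1 ≤ ν ≤ n. -/

import Mathlib

open Polynomial

/-!
The multiplicities of the roots of `T² - 1` add up to its degree `2n`, and the even ones
contribute an even amount, so their odd part `2ν` is even and at most `2n`. If it were `0`,
every multiplicity would be even and `T² - 1 = Q²` for some `Q`, as `ℂ` is algebraically
closed; then `(T - Q)(T + Q) = 1` forces `T - Q` and `T + Q`, hence `2T`, to be constant.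
-/

theorem Finset.even_sum_filter_odd_iff {ι : Type*} (s : Finset ι) (f : ι → ℕ) :
    Even (∑ i ∈ s with Odd (f i), f i) ↔ Even (∑ i ∈ s, f i) := by
  have h_even : Even (∑ i ∈ s with ¬Odd (f i), f i) :=
    Finset.even_sum _ fun i hi => Nat.not_odd_iff_even.mp (Finset.mem_filter.mp hi).2
  rw [← Finset.sum_filter_add_sum_filter_not s (fun i => Odd (f i)) f, Nat.even_add]
  exact (iff_true_right h_even).symm

theorem Finset.sum_filter_odd_eq_zero_iff {ι : Type*} (s : Finset ι) (f : ι → ℕ) :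
    ∑ i ∈ s with Odd (f i), f i = 0 ↔ ∀ i ∈ s, Even (f i) := by
  simp only [Finset.sum_eq_zero_iff, Finset.mem_filter, and_imp, ← Nat.not_odd_iff_even]
  exact forall₂_congr fun i _ =>
    ⟨fun h hodd => by simp [h hodd] at hodd, fun h hodd => (h hodd).elim⟩

namespace Polynomial

theorem Splits.sum_rootMultiplicity_eq_natDegree {R : Type*} [CommRing R] [IsDomain R]
    [DecidableEq R] {p : R[X]} (hp : p.Splits) :
    ∑ a ∈ p.roots.toFinset, p.rootMultiplicity a = p.natDegree := by
  simp_rw [← count_roots, Multiset.toFinset_sum_count_eq, hp.natDegree_eq_card_roots]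

theorem isSquare_of_forall_mem_roots_even_rootMultiplicity {K : Type*} [Field K] [IsAlgClosed K]
    {p : K[X]} (h : ∀ a ∈ p.roots, Even (p.rootMultiplicity a)) : IsSquare p := by
  classical
  obtain ⟨u, hu⟩ := p.roots.exists_smul_of_dvd_count (k := 2) fun a ha => by
    rw [count_roots]; exact (h a ha).two_dvd
  obtain ⟨c, hc⟩ := IsAlgClosed.exists_pow_nat_eq p.leadingCoeff two_pos
  refine ⟨C c * (u.map (X - C ·)).prod, ?_⟩
  rw [(IsAlgClosed.splits p).eq_prod_roots, hu, Multiset.map_nsmul, Multiset.prod_nsmul, ← hc,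
    C_pow]
  ring

theorem not_isSquare_sq_sub_one {K : Type*} [Field K] [NeZero (2 : K)] {T : K[X]}
    (hT : 0 < T.natDegree) : ¬IsSquare (T ^ 2 - 1) := by
  rintro ⟨Q, hQ⟩
  have h_mul : (T - Q) * (T + Q) = 1 := by linear_combination hQ
  have h_sub := natDegree_eq_zero_of_isUnit (IsUnit.of_mul_eq_one _ h_mul)
  have h_add := natDegree_eq_zero_of_isUnit (IsUnit.of_mul_eq_one_right _ h_mul)
  have h_two_mul : (C 2 * T).natDegree = 0 := by
    rw [show C 2 * T = (T - Q) + (T + Q) by rw [C_ofNat]; ring]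
    exact Nat.le_zero.mp ((natDegree_add_le _ _).trans (by rw [h_sub, h_add, max_self]))
  rw [natDegree_C_mul two_ne_zero] at h_two_mul
  omega

theorem natDegree_sq_sub_one {R : Type*} [CommRing R] [NoZeroDivisors R] (T : R[X]) :
    (T ^ 2 - 1).natDegree = 2 * T.natDegree := by
  rw [← C_1, natDegree_sub_C, natDegree_pow, mul_comm]

end Polynomial

theorem sum_odd_multiplicities_even (T : Polynomial ℂ) (n : ℕ)
    (hn : 1 ≤ n) (hdeg : T.natDegree = n) :
    ∃ ν : ℕ, 1 ≤ ν ∧ ν ≤ n ∧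
      (∑ z ∈ (T ^ 2 - 1).roots.toFinset.filter
          (fun z => Odd ((T ^ 2 - 1).rootMultiplicity z)),
        (T ^ 2 - 1).rootMultiplicity z) = 2 * ν := by
  set P := T ^ 2 - 1
  have h_total : ∑ a ∈ P.roots.toFinset, P.rootMultiplicity a = 2 * n := by
    rw [(IsAlgClosed.splits P).sum_rootMultiplicity_eq_natDegree, natDegree_sq_sub_one, hdeg]
  set S := ∑ z ∈ P.roots.toFinset with Odd (P.rootMultiplicity z), P.rootMultiplicity z
  have hS_le : S ≤ 2 * n := h_total ▸ Finset.sum_le_sum_of_subset (Finset.filter_subset _ _)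
  have hS_ne : S ≠ 0 := fun hS => by
    refine not_isSquare_sq_sub_one (hdeg ▸ hn)
      (isSquare_of_forall_mem_roots_even_rootMultiplicity fun a ha => ?_)
    exact (Finset.sum_filter_odd_eq_zero_iff _ _).mp hS a (Multiset.mem_toFinset.mpr ha)
  obtain ⟨ν, hν⟩ := (Finset.even_sum_filter_odd_iff _ _).mpr (h_total ▸ even_two_mul n)
  exact ⟨ν, by omega, by omega, by omega⟩
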